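/- arXiv:1301.1360 — 2 statements merged into one kernel-verified Lean document; each statement's English description precedes it below -/
import Mathlib

section
/- Let m ≥ 3 and suppose real angles satisfy Σ_{k=1}^{m} δ_k = 2π with each δ_k ≥ 0, and 2·Σ_{k=1}^{m} sin(δ_k/2) ≥ 2m·sin(π/m) − s for some s > 0 small. Then there is a constant C depending only on m such that |δ_k − 2π/m| ≤ C·√s for all k. -/
open Real Finset

/-!
Put `a = π / m` and `xₖ = δₖ / 2 ∈ [0, π]`, so that `∑ xₖ = m a`. The tangent-line gaps
`sin a + cos a (xₖ - a) - sin xₖ` are nonnegative by concavity of `sin` and sum to half the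
perimeter deficit, hence each is at most `s / 2`. Each gap is also at least
`3 a (xₖ - a)² / (4 π²)`: chaining the tangent lines at `a` and at the midpoint `(xₖ + a) / 2`
bounds it below by `(xₖ - a) / 2 · (cos a - cos ((xₖ + a) / 2))`, and Jordan's inequality
`sin t ≥ 2 t / π` makes this product quadratic in `xₖ - a`.
-/

theorem ConcaveOn.le_add_mul_sub_of_hasDerivAt {S : Set ℝ} {f : ℝ → ℝ} {x y f' : ℝ}
    (hf : ConcaveOn ℝ S f) (hx : x ∈ S) (hy : y ∈ S) (hf' : HasDerivAt f f' y) :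
    f x ≤ f y + f' * (x - y) := by
  rcases lt_trichotomy x y with hxy | rfl | hxy
  · have h := hf.le_slope_of_hasDerivAt hx hy hxy hf'
    rw [slope_def_field, le_div_iff₀ (sub_pos.2 hxy)] at h
    linarith
  · simp
  · have h := hf.slope_le_of_hasDerivAt hy hx hxy hf'
    rw [slope_def_field, div_le_iff₀ (sub_pos.2 hxy)] at h
    linarith

theorem sum_tangent_gap {ι : Type*} [Fintype ι] (f : ℝ → ℝ) (c a : ℝ) (x : ι → ℝ)
    (hx : ∑ i, x i = Fintype.card ι * a) :
    ∑ i, (f a + c * (x i - a) - f (x i)) = Fintype.card ι * f a - ∑ i, f (x i) := by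
  simp only [sum_sub_distrib, sum_add_distrib, ← mul_sum, hx, sum_const, card_univ, nsmul_eq_mul]
  ring

namespace Real

theorem sin_le_sin_add_cos_mul_sub {x y : ℝ} (hx : x ∈ Set.Icc 0 π) (hy : y ∈ Set.Icc 0 π) :
    sin x ≤ sin y + cos y * (x - y) :=
  strictConcaveOn_sin_Icc.concaveOn.le_add_mul_sub_of_hasDerivAt hx hy (hasDerivAt_sin y)

theorem mul_sq_le_mul_sin {u : ℝ} (hu : |u| ≤ π / 2) : 2 / π * u ^ 2 ≤ u * sin u := by
  rcases le_total 0 u with hu0 | hu0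
  · have h := mul_le_sin hu0 (le_of_abs_le hu)
    nlinarith
  · have h := mul_le_sin (neg_nonneg.2 hu0) (by rwa [abs_of_nonpos hu0] at hu)
    rw [sin_neg] at h
    nlinarith

theorem sub_mul_cos_sub_cos_le_sin_tangent_gap {a x : ℝ} (ha : a ∈ Set.Icc 0 π)
    (hx : x ∈ Set.Icc 0 π) :
    (x - a) / 2 * (cos a - cos ((x + a) / 2)) ≤ sin a + cos a * (x - a) - sin x := by
  have hmid : (x + a) / 2 ∈ Set.Icc 0 π := ⟨by linarith [hx.1, ha.1], by linarith [hx.2, ha.2]⟩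
  have h₁ := sin_le_sin_add_cos_mul_sub hx hmid
  have h₂ := sin_le_sin_add_cos_mul_sub hmid ha
  linear_combination h₁ + h₂

theorem mul_sq_le_sin_tangent_gap {a x : ℝ} (ha : 0 ≤ a) (ha3 : a ≤ π / 3)
    (hx : x ∈ Set.Icc 0 π) :
    3 * a * (x - a) ^ 2 ≤ 4 * π ^ 2 * (sin a + cos a * (x - a) - sin x) := by
  have hπ := pi_pos
  have hgap := sub_mul_cos_sub_cos_le_sin_tangent_gap ⟨ha, by linarith⟩ hx
  have hcos : cos a - cos ((x + a) / 2) = 2 * sin ((3 * a + x) / 4) * sin ((x - a) / 4) := by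
    rw [cos_sub_cos, show (a - (x + a) / 2) / 2 = -((x - a) / 4) by ring, sin_neg]
    ring_nf
  have hw : 2 / π * ((x - a) / 4) ^ 2 ≤ (x - a) / 4 * sin ((x - a) / 4) :=
    mul_sq_le_mul_sin (abs_le.2 ⟨by linarith [hx.1], by linarith [hx.2]⟩)
  have hz : 2 / π * ((3 * a + x) / 4) ≤ sin ((3 * a + x) / 4) :=
    mul_le_sin (by linarith [hx.1]) (by linarith [hx.2])
  have hz' : 3 * a / (2 * π) ≤ sin ((3 * a + x) / 4) := by
    refine le_trans ?_ hz
    rw [div_mul_eq_mul_div, div_le_div_iff₀ (by positivity) hπ]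
    nlinarith [hx.1]
  calc 3 * a * (x - a) ^ 2
      = 16 * π ^ 2 * (2 / π * ((x - a) / 4) ^ 2 * (3 * a / (2 * π))) := by field_simp; ring
    _ ≤ 16 * π ^ 2 * ((x - a) / 4 * sin ((x - a) / 4) * sin ((3 * a + x) / 4)) := by
        gcongr
        exact (by positivity : (0:ℝ) ≤ 2 / π * ((x - a) / 4) ^ 2).trans hw
    _ = 4 * π ^ 2 * ((x - a) / 2 * (cos a - cos ((x + a) / 2))) := by rw [hcos]; ring
    _ ≤ _ := by gcongr

end Real

theorem near_max_perimeter_angles_close (m : ℕ) (hm : 3 ≤ m) :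
    ∃ C > (0 : ℝ), ∃ ε > (0 : ℝ), ∀ (s : ℝ) (δ : Fin m → ℝ),
      0 < s → s < ε →
      (∀ k, 0 ≤ δ k) →
      (∑ k, δ k = 2 * Real.pi) →
      (2 * ∑ k, Real.sin (δ k / 2) ≥ 2 * m * Real.sin (Real.pi / m) - s) →
      ∀ k, |δ k - 2 * Real.pi / m| ≤ C * Real.sqrt s := by
  refine ⟨3 * √m, by positivity, 1, one_pos, fun s δ hs _ hδ0 hsum hper k => ?_⟩
  have hm0 : (0 : ℝ) < m := by positivity
  have hπ := pi_pos
  set a := π / m with ha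
  have ha3 : a ≤ π / 3 := div_le_div_of_nonneg_left hπ.le (by norm_num) (by exact_mod_cast hm)
  have hx : ∀ j, δ j / 2 ∈ Set.Icc 0 π := fun j =>
    ⟨by linarith [hδ0 j], by linarith [hsum ▸ single_le_sum (fun i _ => hδ0 i) (mem_univ j)]⟩
  have hgap : ∀ j, 3 * a * (δ j / 2 - a) ^ 2 ≤
      4 * π ^ 2 * (sin a + cos a * (δ j / 2 - a) - sin (δ j / 2)) :=
    fun j => mul_sq_le_sin_tangent_gap (by positivity) ha3 (hx j)
  have htotal : ∑ j, (sin a + cos a * (δ j / 2 - a) - sin (δ j / 2)) ≤ s / 2 := by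
    rw [sum_tangent_gap sin _ a _ (by rw [← sum_div, hsum, Fintype.card_fin, ha]; field_simp)]
    rw [Fintype.card_fin]
    linarith
  have hgap_nonneg : ∀ j, 0 ≤ sin a + cos a * (δ j / 2 - a) - sin (δ j / 2) := fun j =>
    nonneg_of_mul_nonneg_right ((by positivity : (0 : ℝ) ≤ _).trans (hgap j)) (by positivity)
  have hk := (single_le_sum (fun j _ => hgap_nonneg j) (mem_univ k)).trans htotal
  have hdev : π * (3 * (δ k / 2 - a) ^ 2) ≤ π * (2 * π * m * s) := calc
    π * (3 * (δ k / 2 - a) ^ 2) = m * (3 * a * (δ k / 2 - a) ^ 2) := by rw [ha]; field_simp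
    _ ≤ m * (4 * π ^ 2 * (s / 2)) :=
        mul_le_mul_of_nonneg_left ((hgap k).trans (by gcongr)) hm0.le
    _ = π * (2 * π * m * s) := by ring
  have hπ' := pi_lt_d2
  apply abs_le_of_sq_le_sq _ (by positivity)
  rw [mul_pow, mul_pow, sq_sqrt hm0.le, sq_sqrt hs.le,
    show δ k - 2 * π / m = 2 * (δ k / 2 - a) by rw [ha]; ring]
  nlinarith [le_of_mul_le_mul_left hdev hπ, mul_pos hm0 hs]
end

section
/- For m ≥ 2 and s > 0, the volume of the ellipsoid {y ∈ ℝ^{m-1} : Σ_{k=1}^{m-1} (1 − cos(πk/m))·y_k² ≤ 2s/sin(π/m)} equals (π^{(m-1)/2} / Γ((m+1)/2)) · 2^{m-1} · s^{(m-1)/2} / (√m · (sin(π/m))^{(m-1)/2}). -/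
/-!
The ellipsoid is the preimage of the closed ball of radius `√(2s / sin(π/m))` under the diagonal
map `y ↦ (√(1 - cos(πk/m)) · y_k)_k`, so its volume is the volume of that ball divided by
`∏_k √(1 - cos(πk/m))`. The product is evaluated from `∏_{k=1}^{2m-1} (1 - ζ^k) = 2m` for the
primitive `2m`-th root of unity `ζ = e^{iπ/m}`: taking `Complex.normSq` turns the factor `k` into
`2 - 2 cos(πk/m)`, the factors `k` and `2m - k` agree and the middle one is `4`, whence
`∏_{k=1}^{m-1} (2 - 2 cos(πk/m)) = m`.
-/

open Real MeasureTheory Finset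

lemma Complex.normSq_one_sub_exp_ofReal_mul_I (θ : ℝ) :
    Complex.normSq (1 - Complex.exp (θ * Complex.I)) = 2 - 2 * Real.cos θ := by
  rw [Complex.normSq_apply, Complex.sub_re, Complex.sub_im, Complex.exp_ofReal_mul_I_re,
    Complex.exp_ofReal_mul_I_im, Complex.one_re, Complex.one_im]
  linear_combination Real.sin_sq_add_cos_sq θ

theorem prod_range_two_mul_add_one_two_sub_two_cos (n : ℕ) :
    ∏ k ∈ range (2 * n + 1), (2 - 2 * cos (π * ((k + 1 : ℕ) : ℝ) / (n + 1))) =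
      (2 * (n + 1)) ^ 2 := by
  set ζ := Complex.exp (π * Complex.I / (n + 1))
  have hζ : IsPrimitiveRoot ζ (2 * n + 1 + 1) := by
    convert Complex.isPrimitiveRoot_exp (2 * n + 1 + 1) (by omega) using 2
    rw [show ((2 * n + 1 + 1 : ℕ) : ℂ) = 2 * (n + 1) by push_cast; ring, mul_assoc,
      mul_div_mul_left _ _ two_ne_zero]
  have hζpow (j : ℕ) : ζ ^ j = Complex.exp ((π * j / (n + 1) : ℝ) * Complex.I) := by
    rw [← Complex.exp_nat_mul]
    push_cast
    ring_nf
  have h := congrArg Complex.normSq hζ.prod_one_sub_pow_eq_order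
  simp only [map_prod, hζpow, Complex.normSq_one_sub_exp_ofReal_mul_I] at h
  rw [h, show ((2 * n + 1 : ℕ) : ℂ) + 1 = ((2 * (n + 1) : ℝ) : ℂ) by push_cast; ring,
    Complex.normSq_ofReal]
  ring

theorem prod_range_two_sub_two_cos_pi_mul_div (n : ℕ) :
    ∏ k ∈ range n, (2 - 2 * cos (π * (k + 1) / (n + 1))) = n + 1 := by
  set g : ℕ → ℝ := fun j ↦ 2 - 2 * cos (π * j / (n + 1)) with hg
  have hfull : ∏ k ∈ range (2 * n + 1), g (k + 1) = (2 * (n + 1)) ^ 2 :=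
    prod_range_two_mul_add_one_two_sub_two_cos n
  have hreflect (j : ℕ) (hj : j ≤ 2 * (n + 1)) : g (2 * (n + 1) - j) = g j := by
    simp only [hg]
    rw [Nat.cast_sub hj]
    push_cast
    rw [show π * (2 * (n + 1) - j) / (n + 1) = 2 * π - π * j / (n + 1) by field_simp,
      cos_two_pi_sub]
  have hmid : g (n + 1) = 4 := by
    simp only [hg]
    push_cast
    rw [mul_div_cancel_right₀ _ (by positivity), cos_pi]
    norm_num
  have hupper : ∏ k ∈ range n, g (n + 1 + k + 1) = ∏ k ∈ range n, g (k + 1) := by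
    rw [← prod_range_reflect (fun k ↦ g (k + 1))]
    refine prod_congr rfl fun k hk ↦ ?_
    rw [mem_range] at hk
    rw [← hreflect _ (by omega)]
    congr 1
    omega
  rw [show 2 * n + 1 = n + 1 + n by ring, prod_range_add, prod_range_succ, hmid, hupper] at hfull
  have hnonneg : 0 ≤ ∏ k ∈ range n, g (k + 1) :=
    prod_nonneg fun k _ ↦ by simp only [hg]; linarith [cos_le_one (π * ((k + 1 : ℕ) : ℝ) / (n + 1))]
  have hsq : (∏ k ∈ range n, g (k + 1)) ^ 2 = ((n : ℝ) + 1) ^ 2 := by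
    linear_combination hfull / 4
  simpa [hg] using (pow_left_inj₀ hnonneg (by positivity) two_ne_zero).mp hsq

theorem prod_fin_one_sub_cos_pi_mul_div {m : ℕ} (hm : m ≠ 0) :
    ∏ k : Fin (m - 1), (1 - cos (π * ((k : ℕ) + 1) / m)) = m / 2 ^ (m - 1) := by
  obtain ⟨n, rfl⟩ := Nat.exists_eq_add_one_of_ne_zero hm
  have h2 (x : ℝ) : 1 - cos x = (2 - 2 * cos x) / 2 := by ring
  rw [Fin.prod_univ_eq_prod_range (fun k ↦ 1 - cos (π * (k + 1) / ↑(n + 1))), Nat.add_sub_cancel]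
  simp only [h2, prod_div_distrib, prod_const, card_range, Nat.cast_succ,
    prod_range_two_sub_two_cos_pi_mul_div]

lemma one_sub_cos_pi_mul_div_pos {m : ℕ} {x : ℝ} (hx₀ : 0 < x) (hx : x < 2 * m) :
    0 < 1 - cos (π * x / m) := by
  have hm : (0 : ℝ) < m := by linarith
  have hθ₀ : 0 < π * x / m := by positivity
  have hθ : π * x / m < 2 * π := by
    rw [div_lt_iff₀ hm]
    nlinarith [pi_pos]
  refine sub_pos.2 <| (cos_le_one _).lt_of_ne fun h ↦ hθ₀.ne' ?_
  exact (cos_eq_one_iff_of_lt_of_lt (by linarith) hθ).1 h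

theorem EuclideanSpace.volume_setOf_sum_mul_sq_le {ι : Type*} [Fintype ι] {a : ι → ℝ}
    (ha : ∀ i, 0 < a i) {R : ℝ} (hR : 0 ≤ R) :
    volume {y : EuclideanSpace ℝ ι | ∑ i, a i * y i ^ 2 ≤ R} =
      ENNReal.ofReal (∏ i, √(a i))⁻¹ * volume (Metric.closedBall (0 : EuclideanSpace ℝ ι) √R) := by
  classical
  set D := Matrix.diagonal fun i ↦ √(a i)
  have hD : 0 < D.det := by
    rw [Matrix.det_diagonal]
    exact prod_pos fun i _ ↦ Real.sqrt_pos.mpr (ha i)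
  have hset : {y : EuclideanSpace ℝ ι | ∑ i, a i * y i ^ 2 ≤ R} =
      D.toEuclideanLin ⁻¹' Metric.closedBall 0 √R := by
    ext y
    simp [D, Matrix.toLpLin_apply, Matrix.mulVec_diagonal, EuclideanSpace.norm_eq, mul_pow,
      Real.sq_sqrt (ha _).le, Real.sqrt_le_sqrt_iff hR]
  rw [hset, Measure.addHaar_preimage_linearMap _ (by simpa using hD.ne'), LinearMap.det_toLpLin,
    abs_of_pos (inv_pos.mpr hD), Matrix.det_diagonal]

theorem ellipsoid_volume (m : ℕ) (hm : 2 ≤ m) (s : ℝ) (hs : 0 < s) :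
    volume {y : EuclideanSpace ℝ (Fin (m - 1)) |
        ∑ k : Fin (m - 1), (1 - Real.cos (Real.pi * ((k : ℕ) + 1) / m)) * y k ^ 2 ≤
          2 * s / Real.sin (Real.pi / m)} =
      ENNReal.ofReal
        (Real.pi ^ (((m : ℝ) - 1) / 2) / Real.Gamma (((m : ℝ) + 1) / 2) *
          2 ^ (m - 1) * s ^ (((m : ℝ) - 1) / 2) /
            (Real.sqrt m * Real.sin (Real.pi / m) ^ (((m : ℝ) - 1) / 2))) := by
  have : Nonempty (Fin (m - 1)) := ⟨⟨0, by omega⟩⟩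
  have hsin : 0 < sin (π / m) :=
    sin_pos_of_pos_of_lt_pi (by positivity) (div_lt_self pi_pos (by exact_mod_cast hm))
  have ha (k : Fin (m - 1)) : 0 < 1 - cos (π * ((k : ℕ) + 1) / m) :=
    one_sub_cos_pi_mul_div_pos (by positivity) (by exact_mod_cast (by omega : (k : ℕ) + 1 < 2 * m))
  rw [EuclideanSpace.volume_setOf_sum_mul_sq_le ha (div_pos (by positivity) hsin).le,
    EuclideanSpace.volume_closedBall, ← Real.sqrt_prod _ fun k _ ↦ (ha k).le,
    prod_fin_one_sub_cos_pi_mul_div (by omega), Fintype.card_fin,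
    ← ENNReal.ofReal_pow (sqrt_nonneg _), ← ENNReal.ofReal_mul (by positivity),
    ← ENNReal.ofReal_mul (by positivity)]
  congr 1
  have hN : ((m - 1 : ℕ) : ℝ) = m - 1 := by rw [Nat.cast_sub (by omega)]; simp
  rw [← hN, show ((m : ℝ) + 1) / 2 = (m - 1 : ℕ) / 2 + 1 by rw [hN]; ring]
  simp only [rpow_div_two_eq_sqrt _ pi_pos.le, rpow_div_two_eq_sqrt _ hs.le,
    rpow_div_two_eq_sqrt _ hsin.le, rpow_natCast]
  have h2 : (2 : ℝ) ^ (m - 1) = √2 ^ (m - 1) * √2 ^ (m - 1) := by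
    rw [← mul_pow, mul_self_sqrt zero_le_two]
  rw [h2, sqrt_div' _ (by positivity), sqrt_mul_self (by positivity), sqrt_div' _ hsin.le,
    sqrt_mul zero_le_two, div_pow, mul_pow]
  field_simp
end
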